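/- arXiv:1102.1476 — 4 statements merged into one kernel-verified Lean document; each statement's English description precedes it below -/
import Mathlib

section
/- Let ξ be a real random variable such that P(c₁ ≤ |ξ - ξ'| ≤ c₂) ≥ c₃ for an independent copy ξ' and positive constants c₁ < c₂, c₃. Then for every real number a, P(ξ = a) ≤ √(1 - c₃). -/
open MeasureTheory ProbabilityTheory

/-- If `P(c₁ ≤ |ξ - ξ'| ≤ c₂) ≥ c₃` for an independent copy `ξ'` of `ξ`, with
`0 < c₁ < c₂` and `0 < c₃`, then every atom of `ξ` has probability at most `√(1 - c₃)`. -/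
theorem atom_le_sqrt_of_anticoncentration
    {Ω : Type*} [MeasureSpace Ω] [IsProbabilityMeasure (ℙ : Measure Ω)]
    (ξ ξ' : Ω → ℝ) (hmeas : Measurable ξ) (hmeas' : Measurable ξ')
    (hindep : IndepFun ξ ξ') (hid : IdentDistrib ξ ξ')
    (c₁ c₂ c₃ : ℝ) (hc₁ : 0 < c₁) (hc₁₂ : c₁ < c₂) (hc₃ : 0 < c₃)
    (hanti : ENNReal.ofReal c₃ ≤ ℙ {ω | c₁ ≤ |ξ ω - ξ' ω| ∧ |ξ ω - ξ' ω| ≤ c₂}) :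
    ∀ a : ℝ, ℙ {ω | ξ ω = a} ≤ ENNReal.ofReal (Real.sqrt (1 - c₃)) := by
  intro a
  set A : Set Ω := {ω | c₁ ≤ |ξ ω - ξ' ω| ∧ |ξ ω - ξ' ω| ≤ c₂} with hA
  set B : Set Ω := ξ ⁻¹' {a} ∩ ξ' ⁻¹' {a} with hB
  have hAmeas : MeasurableSet A := by
    apply MeasurableSet.inter
    · exact measurableSet_le measurable_const ((hmeas.sub hmeas').abs)
    · exact measurableSet_le ((hmeas.sub hmeas').abs) measurable_const
  have hdisj : Disjoint B A := by
    rw [Set.disjoint_left]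
    rintro ω ⟨h1, h2⟩ ⟨h3, _⟩
    simp only [Set.mem_preimage, Set.mem_singleton_iff] at h1 h2
    rw [h1, h2] at h3
    simp at h3
    linarith
  have hBmeas : MeasurableSet B :=
    (hmeas (measurableSet_singleton a)).inter (hmeas' (measurableSet_singleton a))
  have hmul : ℙ B = ℙ (ξ ⁻¹' {a}) * ℙ (ξ' ⁻¹' {a}) :=
    hindep.measure_inter_preimage_eq_mul _ _ (measurableSet_singleton a)
      (measurableSet_singleton a)
  have heq : ℙ (ξ' ⁻¹' {a}) = ℙ (ξ ⁻¹' {a}) :=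
    (hid.symm.measure_mem_eq (measurableSet_singleton a))
  set p : ENNReal := ℙ (ξ ⁻¹' {a}) with hp
  have hsum : p * p + ENNReal.ofReal c₃ ≤ 1 := by
    calc p * p + ENNReal.ofReal c₃ ≤ ℙ B + ℙ A := by
          rw [hmul, heq]; exact add_le_add le_rfl hanti
      _ = ℙ (B ∪ A) := (measure_union hdisj hAmeas).symm
      _ ≤ 1 := prob_le_one
  have hple : p ≤ 1 := prob_le_one
  have hpne : p ≠ ⊤ := ne_top_of_le_ne_top ENNReal.one_ne_top hple
  set q : ℝ := p.toReal with hq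
  have hq0 : 0 ≤ q := ENNReal.toReal_nonneg
  have hqq : q * q + c₃ ≤ 1 := by
    have := (ENNReal.toReal_le_toReal (by finiteness) ENNReal.one_ne_top).2 hsum
    rwa [ENNReal.toReal_add (by finiteness) (by finiteness), ENNReal.toReal_mul,
      ENNReal.toReal_ofReal hc₃.le, ENNReal.toReal_one] at this
  have hqs : q ≤ Real.sqrt (1 - c₃) := by
    rw [show (1 : ℝ) - c₃ = 1 - c₃ from rfl]
    exact (Real.le_sqrt hq0 (by nlinarith)).2 (by nlinarith)
  calc p = ENNReal.ofReal q := (ENNReal.ofReal_toReal hpne).symm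
    _ ≤ ENNReal.ofReal (Real.sqrt (1 - c₃)) := ENNReal.ofReal_le_ofReal hqs
end

section
/- Let H be a linear subspace of ℝⁿ of dimension at most k ≤ n. Let u = (f₁ + x₁, …, fₙ + xₙ) where the fᵢ are fixed real numbers and the xᵢ are iid copies of a random variable ξ satisfying sup_a P(ξ = a) ≤ √(1 - c₃) for some constant 0 < c₃ ≤ 1. Then P(u ∈ H) ≤ (√(1 - c₃))^{n - k}. -/
open MeasureTheory ProbabilityTheory

open scoped ENNReal

/-! Some set `T` of at most `dim H` coordinates restricts injectively to `H`, since the coordinate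
functionals on `H` are spanned by at most `dim H` of them. So once the coordinates of `u` in `T`
are fixed, `u ∈ H` pins each of the other `n - |T| ≥ n - k` independent coordinates to a single
value, which happens with probability at most `√(1 - c₃)` each. -/

theorem Submodule.exists_finset_card_le_finrank_injOn_restrict {K ι : Type*} [Field K]
    [Fintype ι] (H : Submodule K (ι → K)) :
    ∃ T : Finset ι, T.card ≤ Module.finrank K H ∧ Set.InjOn (T.restrict (π := fun _ => K)) H := by
  classical
  let φ : ι → Module.Dual K H := fun i => (LinearMap.proj i).comp H.subtype
  obtain ⟨b, -, -, hspan, hli⟩ :=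
    exists_linearIndepOn_extension (linearIndepOn_empty K φ) (Set.empty_subset Set.univ)
  refine ⟨b.toFinset, ?_, fun v hv w hw hvw => ?_⟩
  · rw [Set.toFinset_card, ← Subspace.dual_finrank_eq]
    exact hli.fintype_card_le_finrank
  · -- every coordinate functional is a combination of those in `b`, on which `v` and `w` agree
    let δ : Module.Dual K H →ₗ[K] K :=
      Module.Dual.eval K H ⟨v, hv⟩ - Module.Dual.eval K H ⟨w, hw⟩
    have hb : φ '' b ⊆ LinearMap.ker δ := by
      rintro _ ⟨i, hi, rfl⟩
      simpa [δ, φ, sub_eq_zero] using congrFun hvw ⟨i, by simpa using hi⟩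
    funext i
    simpa [δ, φ, sub_eq_zero] using Submodule.span_le.2 hb (hspan ⟨i, Set.mem_univ i, rfl⟩)

namespace MeasureTheory.Measure

variable {ι : Type*} [Fintype ι] {α : ι → Type*} [∀ i, MeasurableSpace (α i)]
  (μ : ∀ i, Measure (α i)) {p : ℝ≥0∞}

theorem pi_le_pow_card_of_subsingleton [∀ i, SigmaFinite (μ i)] (hp : ∀ i a, μ i {a} ≤ p)
    {s : Set (∀ i, α i)} (hs : s.Subsingleton) : Measure.pi μ s ≤ p ^ Fintype.card ι := by
  rcases hs.eq_empty_or_singleton with rfl | ⟨a, rfl⟩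
  · simp
  · rw [pi_singleton, ← Finset.card_univ, ← Finset.prod_const]
    exact Finset.prod_le_prod' fun i _ => hp i (a i)

theorem pi_le_pow_card_sub_of_injOn_restrict [∀ i, IsProbabilityMeasure (μ i)]
    (hp : ∀ i a, μ i {a} ≤ p) (T : Finset ι) {A : Set (∀ i, α i)} (hA : MeasurableSet A)
    (hT : Set.InjOn T.restrict A) : Measure.pi μ A ≤ p ^ (Fintype.card ι - T.card) := by
  classical
  let e := MeasurableEquiv.piEquivPiSubtypeProd α (· ∈ T)
  have hslice : ∀ t, (Prod.mk t ⁻¹' (e.symm ⁻¹' A)).Subsingleton := by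
    intro t s hs s' hs'
    have := hT hs hs' <| funext fun i => by
      simp [e, MeasurableEquiv.piEquivPiSubtypeProd, Equiv.piEquivPiSubtypeProd_symm_apply, i.2]
    simpa using e.symm.injective this
  rw [← ((measurePreserving_piEquivPiSubtypeProd μ (· ∈ T)).symm e).measure_preimage_equiv,
    prod_apply (e.symm.measurable hA)]
  refine (lintegral_mono fun t => pi_le_pow_card_of_subsingleton (fun i : {i // i ∉ T} => μ i)
    (fun i => hp i) (hslice t)).trans ?_
  simp [Fintype.card_subtype_compl]

end MeasureTheory.Measure

theorem MeasureTheory.Measure.pi_add_mem_submodule_le {ι : Type*} [Fintype ι]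
    (μ : ι → Measure ℝ) [∀ i, IsProbabilityMeasure (μ i)] {p : ℝ≥0∞} (hp1 : p ≤ 1)
    (hp : ∀ i a, μ i {a} ≤ p) (H : Submodule ℝ (ι → ℝ)) (f : ι → ℝ) :
    Measure.pi μ {v | f + v ∈ H} ≤ p ^ (Fintype.card ι - Module.finrank ℝ H) := by
  obtain ⟨T, hTcard, hT⟩ := H.exists_finset_card_le_finrank_injOn_restrict
  have hmeas : MeasurableSet {v | f + v ∈ H} :=
    H.closed_of_finiteDimensional.measurableSet.preimage (measurable_const_add f)
  have hinj : Set.InjOn T.restrict {v | f + v ∈ H} := fun v hv w hw hvw =>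
    add_left_cancel (hT hv hw (funext fun i => congrArg (f i + ·) (congrFun hvw i)))
  calc Measure.pi μ {v | f + v ∈ H} ≤ p ^ (Fintype.card ι - T.card) :=
        pi_le_pow_card_sub_of_injOn_restrict μ hp T hmeas hinj
    _ ≤ p ^ (Fintype.card ι - Module.finrank ℝ H) := pow_le_pow_of_le_one zero_le hp1 (by omega)

theorem odlyzko_lemma_general
    {Ω : Type*} [MeasureSpace Ω] [IsProbabilityMeasure (ℙ : Measure Ω)]
    (n k : ℕ)
    (H : Submodule ℝ (Fin n → ℝ)) (hH : Module.finrank ℝ H ≤ k)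
    (f : Fin n → ℝ) (x : Fin n → Ω → ℝ) (hmeas : ∀ i, Measurable (x i))
    (hindep : iIndepFun x ℙ)
    (c₃ : ℝ) (hc₃ : 0 < c₃)
    (hatom : ∀ i, ∀ a : ℝ, ℙ {ω | x i ω = a} ≤ ENNReal.ofReal (Real.sqrt (1 - c₃))) :
    ℙ {ω | (fun i => f i + x i ω) ∈ H} ≤
      ENNReal.ofReal (Real.sqrt (1 - c₃) ^ (n - k)) := by
  set p := ENNReal.ofReal (Real.sqrt (1 - c₃))
  have hp1 : p ≤ 1 := ENNReal.ofReal_le_one.2 (Real.sqrt_le_one.2 (by linarith))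
  have : ∀ i, IsProbabilityMeasure ((ℙ : Measure Ω).map (x i)) := fun i =>
    Measure.isProbabilityMeasure_map (hmeas i).aemeasurable
  have hatom_law : ∀ i a, (ℙ : Measure Ω).map (x i) {a} ≤ p := fun i a => by
    rw [Measure.map_apply (hmeas i) (measurableSet_singleton a)]
    exact hatom i a
  calc ℙ {ω | (fun i => f i + x i ω) ∈ H}
      ≤ (ℙ : Measure Ω).map (fun ω i => x i ω) {v | f + v ∈ H} :=
        Measure.le_map_apply (measurable_pi_lambda _ hmeas).aemeasurable _
    _ = Measure.pi (fun i => (ℙ : Measure Ω).map (x i)) {v | f + v ∈ H} := by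
        rw [hindep.map_fun_eq_pi_map fun i => (hmeas i).aemeasurable]
    _ ≤ p ^ (n - Module.finrank ℝ H) := by
        simpa using Measure.pi_add_mem_submodule_le _ hp1 hatom_law H f
    _ ≤ p ^ (n - k) := pow_le_pow_of_le_one zero_le hp1 (by omega)
    _ = ENNReal.ofReal (Real.sqrt (1 - c₃) ^ (n - k)) :=
        (ENNReal.ofReal_pow (Real.sqrt_nonneg _) _).symm

/-- Odlyzko's lemma: if `H ≤ ℝⁿ` has dimension at most `k ≤ n` and
`u = (f₁ + x₁, …, fₙ + xₙ)` with `xᵢ` iid whose atoms have probability at most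
`√(1 - c₃)`, then `P(u ∈ H) ≤ (√(1 - c₃))^(n - k)`. -/
theorem odlyzko_lemma
    {Ω : Type*} [MeasureSpace Ω] [IsProbabilityMeasure (ℙ : Measure Ω)]
    (n k : ℕ) (hkn : k ≤ n)
    (H : Submodule ℝ (Fin n → ℝ)) (hH : Module.finrank ℝ H ≤ k)
    (f : Fin n → ℝ) (x : Fin n → Ω → ℝ) (hmeas : ∀ i, Measurable (x i))
    (hindep : iIndepFun x ℙ)
    (hid : ∀ i j, IdentDistrib (x i) (x j))
    (c₃ : ℝ) (hc₃ : 0 < c₃) (hc₃1 : c₃ ≤ 1)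
    (hatom : ∀ i, ∀ a : ℝ, ℙ {ω | x i ω = a} ≤ ENNReal.ofReal (Real.sqrt (1 - c₃))) :
    ℙ {ω | (fun i => f i + x i ω) ∈ H} ≤
      ENNReal.ofReal (Real.sqrt (1 - c₃) ^ (n - k)) :=
  odlyzko_lemma_general n k H hH f x hmeas hindep c₃ hc₃ hatom
end

section
/- Let U = {u₁, …, uₙ} be a finite subset of ℝ contained in a proper symmetric generalized arithmetic progression P of rank r. Suppose the coordinate vectors Φ(uᵢ) ∈ ℤʳ (unique since P is proper) all lie on a hyperplane {k : α₁k₁ + ⋯ + αᵣkᵣ = 0} with integers αᵢ, αᵣ ≠ 0. Then, choosing w with g_r = αᵣ w, the symmetric GAP P' of rank r − 1 generated by g_i' := g_i − αᵢ w (1 ≤ i ≤ r − 1) with the same dimensions K₁, …, K_{r−1} still contains U, and Vol(P') ≤ Vol(P). -/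
open Finset

/-- Rank reduction for proper symmetric GAPs: if every element of `U` has coordinates
(in the proper symmetric GAP `P` of rank `r+1` with generators `g` and dimensions `K`)
lying on the hyperplane `∑ αᵢ kᵢ = 0` with `α` integral and `α_last ≠ 0`, then the
symmetric GAP of rank `r` with generators `gᵢ' = gᵢ - αᵢ w` (where `g_last = α_last • w`)
and the same dimensions still contains `U`, and its volume is at most that of `P`. -/
theorem gap_rank_reduction
    (r : ℕ) (g : Fin (r + 1) → ℝ) (K : Fin (r + 1) → ℕ) (hK : ∀ i, 0 < K i)
    (hproper : Set.InjOn (fun k : Fin (r + 1) → ℤ => ∑ i, (k i : ℝ) * g i)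
      {k | ∀ i, |k i| ≤ (K i : ℤ)})
    (U : Finset ℝ)
    (α : Fin (r + 1) → ℤ) (hα : α (Fin.last r) ≠ 0)
    (w : ℝ) (hw : g (Fin.last r) = (α (Fin.last r) : ℝ) * w)
    (hU : ∀ u ∈ U, ∃ k : Fin (r + 1) → ℤ,
      (∀ i, |k i| ≤ (K i : ℤ)) ∧ u = ∑ i, (k i : ℝ) * g i ∧ ∑ i, α i * k i = 0) :
    (∀ u ∈ U, ∃ k : Fin r → ℤ,
      (∀ i, |k i| ≤ (K i.castSucc : ℤ)) ∧
      u = ∑ i, (k i : ℝ) * (g i.castSucc - (α i.castSucc : ℝ) * w)) ∧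
    (∏ i : Fin r, (2 * K i.castSucc + 1) : ℕ) ≤ ∏ i : Fin (r + 1), (2 * K i + 1) := by
  constructor
  · intro u hu
    obtain ⟨k, hk, hsum, hplane⟩ := hU u hu
    refine ⟨fun i => k i.castSucc, fun i => hk _, ?_⟩
    have h1 : ∑ i : Fin r, ((α i.castSucc : ℝ)) * (k i.castSucc : ℝ)
        = -((α (Fin.last r) : ℝ) * (k (Fin.last r) : ℝ)) := by
      have := congrArg (fun z : ℤ => (z : ℝ)) hplane
      push_cast at this
      rw [Fin.sum_univ_castSucc] at this
      linarith
    rw [hsum, Fin.sum_univ_castSucc]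
    have : ∑ i : Fin r, (k i.castSucc : ℝ) * (g i.castSucc - (α i.castSucc : ℝ) * w)
        = ∑ i : Fin r, (k i.castSucc : ℝ) * g i.castSucc
          - (∑ i : Fin r, (α i.castSucc : ℝ) * (k i.castSucc : ℝ)) * w := by
      rw [Finset.sum_mul, ← Finset.sum_sub_distrib]
      apply Finset.sum_congr rfl
      intro i _
      ring
    rw [this, h1, hw]
    ring
  · rw [Fin.prod_univ_castSucc]
    exact Nat.le_mul_of_pos_right _ (by positivity)
end

section
/- Let ξ satisfy P(c₁ ≤ |ξ − ξ'| ≤ c₂) ≥ c₃ with ξ' an independent copy and constants 0 < c₁ < c₂, c₃ > 0. Then the random variable ζ = ξ − ξ' satisfies the same type of condition: there exist positive constants c₁' < c₂' and c₃' > 0 such that P(c₁' ≤ |ζ − ζ'| ≤ c₂') ≥ c₃', where ζ' is an independent copy of ζ. -/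
/-!
The difference `ζ = ξ₀ - ξ₁` of two iid variables is symmetric, so given that `|ζ|` and `|ζ'|`
both lie in `[c₁, c₂]`, flipping the sign of `ζ'` shows that `ζ` and `ζ'` have opposite signs with
probability at least `1/2`. On that event `|ζ - ζ'| = |ζ| + |ζ'| ∈ [2c₁, 2c₂]`, so the constants
`2c₁, 2c₂, c₃²/2` work.
-/

open MeasureTheory ProbabilityTheory

open scoped Pointwise

namespace ProbabilityTheory

variable {Ω Ω' E : Type*} {mΩ : MeasurableSpace Ω} {mΩ' : MeasurableSpace Ω'}
  [MeasurableSpace E] [AddGroup E] [MeasurableSub₂ E] {μ : Measure Ω} {ν : Measure Ω'}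
  {X Y : Ω → E} {Z W : Ω' → E}

lemma IdentDistrib.sub_of_indepFun [IsFiniteMeasure μ] (hXZ : IdentDistrib X Z μ ν)
    (hYW : IdentDistrib Y W μ ν) (hXY : X ⟂ᵢ[μ] Y) (hZW : Z ⟂ᵢ[ν] W) :
    IdentDistrib (X - Y) (Z - W) μ ν :=
  (hXZ.prodMk hYW hXY hZW).comp (measurable_fst.sub measurable_snd)

lemma isNegInvariant_map_sub_of_identDistrib [IsFiniteMeasure μ] [MeasurableNeg E]
    (hXY : X ⟂ᵢ[μ] Y) (hid : IdentDistrib X Y μ μ) :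
    (μ.map (X - Y)).IsNegInvariant := by
  have hswap : IdentDistrib (X - Y) (Y - X) μ μ := hid.sub_of_indepFun hid.symm hXY hXY.symm
  constructor
  rw [Measure.neg_def, AEMeasurable.map_map_of_aemeasurable measurable_neg.aemeasurable
    hswap.aemeasurable_fst, hswap.map_eq]
  congr 1
  funext ω
  simp

end ProbabilityTheory

lemma abs_sub_eq_abs_add_abs_of_mul_nonpos {α : Type*} [CommRing α] [LinearOrder α]
    [IsStrictOrderedRing α] {a b : α} (h : a * b ≤ 0) : |a - b| = |a| + |b| := by
  rw [← sq_eq_sq₀ (abs_nonneg _) (by positivity), sq_abs, add_sq, sq_abs, sq_abs, mul_assoc,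
    ← abs_mul, abs_of_nonpos h]
  ring

namespace MeasureTheory.Measure

variable {μ ν : Measure ℝ} [SFinite μ] [SFinite ν] [ν.IsNegInvariant]

lemma prod_opposite_signs_eq_prod_same_signs (s : Set ℝ) {t : Set ℝ} (ht : -t = t) :
    (μ.prod ν) {p | p.1 ∈ s ∧ p.2 ∈ t ∧ p.1 * p.2 ≤ 0} =
      (μ.prod ν) {p | p.1 ∈ s ∧ p.2 ∈ t ∧ 0 ≤ p.1 * p.2} := by
  have hflip : MeasurePreserving (MeasurableEquiv.prodCongr (.refl ℝ) (.neg ℝ))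
      (μ.prod ν) (μ.prod ν) :=
    (MeasurePreserving.id μ).prod (measurePreserving_neg ν)
  rw [← hflip.measure_preimage_equiv]
  congr 1
  ext ⟨a, b⟩
  simp [MeasurableEquiv.prodCongr, ← Set.mem_neg, ht]

lemma prod_le_two_mul_prod_opposite_signs (s : Set ℝ) {t : Set ℝ} (ht : -t = t) :
    μ s * ν t ≤ 2 * (μ.prod ν) {p | p.1 ∈ s ∧ p.2 ∈ t ∧ p.1 * p.2 ≤ 0} := by
  calc μ s * ν t = (μ.prod ν) (s ×ˢ t) := (prod_prod s t).symm
    _ ≤ (μ.prod ν) ({p | p.1 ∈ s ∧ p.2 ∈ t ∧ p.1 * p.2 ≤ 0} ∪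
          {p | p.1 ∈ s ∧ p.2 ∈ t ∧ 0 ≤ p.1 * p.2}) := by
      refine measure_mono fun p ⟨hs, ht⟩ ↦ ?_
      rcases le_total (p.1 * p.2) 0 with h | h
      exacts [Or.inl ⟨hs, ht, h⟩, Or.inr ⟨hs, ht, h⟩]
    _ ≤ _ := measure_union_le _ _
    _ = _ := by rw [← prod_opposite_signs_eq_prod_same_signs s ht, two_mul]

end MeasureTheory.Measure

/-- Closure of the anti-concentration condition under symmetrized differences:
if `P(c₁ ≤ |ξ₀ - ξ₁| ≤ c₂) ≥ c₃` for iid copies `ξ₀, ξ₁, ξ₂, ξ₃` of `ξ`, then the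
difference `ζ = ξ₀ - ξ₁` satisfies the same type of condition, witnessed by the
independent copy `ζ' = ξ₂ - ξ₃`. -/
theorem anticoncentration_of_difference
    {Ω : Type*} [MeasureSpace Ω] [IsProbabilityMeasure (ℙ : Measure Ω)]
    (ξ : Fin 4 → Ω → ℝ) (hmeas : ∀ i, Measurable (ξ i))
    (hindep : iIndepFun ξ ℙ)
    (hid : ∀ i j, IdentDistrib (ξ i) (ξ j))
    (c₁ c₂ c₃ : ℝ) (hc₁ : 0 < c₁) (hc₁₂ : c₁ < c₂) (hc₃ : 0 < c₃)
    (hanti : ENNReal.ofReal c₃ ≤ ℙ {ω | c₁ ≤ |ξ 0 ω - ξ 1 ω| ∧ |ξ 0 ω - ξ 1 ω| ≤ c₂}) :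
    ∃ c₁' c₂' c₃' : ℝ, 0 < c₁' ∧ c₁' < c₂' ∧ 0 < c₃' ∧
      ENNReal.ofReal c₃' ≤
        ℙ {ω | c₁' ≤ |(ξ 0 ω - ξ 1 ω) - (ξ 2 ω - ξ 3 ω)| ∧
               |(ξ 0 ω - ξ 1 ω) - (ξ 2 ω - ξ 3 ω)| ≤ c₂'} := by
  set ζ := ξ 0 - ξ 1
  set ζ' := ξ 2 - ξ 3
  have hζ : Measurable ζ := (hmeas 0).sub (hmeas 1)
  have hζ' : Measurable ζ' := (hmeas 2).sub (hmeas 3)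
  have hζζ' : ζ ⟂ᵢ ζ' :=
    hindep.indepFun_sub_sub hmeas 0 1 2 3 (by decide) (by decide) (by decide) (by decide)
  have hlaw : IdentDistrib ζ' ζ :=
    (hid 2 0).sub_of_indepFun (hid 3 1) (hindep.indepFun (by decide)) (hindep.indepFun (by decide))
  set law := (ℙ : Measure Ω).map ζ
  have : law.IsNegInvariant :=
    isNegInvariant_map_sub_of_identDistrib (hindep.indepFun (by decide)) (hid 0 1)
  have hjoint : (ℙ : Measure Ω).map (fun ω ↦ (ζ ω, ζ' ω)) = law.prod law := by
    rw [hζζ'.map_prod_eq_prod_map_map hζ.aemeasurable hζ'.aemeasurable, hlaw.map_eq]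
  set I := abs ⁻¹' Set.Icc c₁ c₂
  have hI : -I = I := by ext; simp [I]
  have hζI : ENNReal.ofReal c₃ ≤ law I := by
    rwa [Measure.map_apply hζ (measurableSet_Icc.preimage measurable_abs)]
  refine ⟨2 * c₁, 2 * c₂, c₃ * c₃ / 2, by linarith, by linarith, by positivity, ?_⟩
  calc ENNReal.ofReal (c₃ * c₃ / 2)
      ≤ (law.prod law) {p | p.1 ∈ I ∧ p.2 ∈ I ∧ p.1 * p.2 ≤ 0} := by
        rw [ENNReal.ofReal_div_of_pos two_pos, ENNReal.ofReal_mul hc₃.le, ENNReal.ofReal_ofNat]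
        exact ENNReal.div_le_of_le_mul'
          ((mul_le_mul' hζI hζI).trans (Measure.prod_le_two_mul_prod_opposite_signs I hI))
    _ ≤ (law.prod law) ((fun p ↦ |p.1 - p.2|) ⁻¹' Set.Icc (2 * c₁) (2 * c₂)) := by
        refine measure_mono fun p ⟨⟨ha₁, ha₂⟩, ⟨hb₁, hb₂⟩, hab⟩ ↦ ?_
        simp only [Set.mem_preimage, abs_sub_eq_abs_add_abs_of_mul_nonpos hab]
        constructor <;> linarith
    _ = _ := by
        rw [← hjoint, Measure.map_apply (hζ.prodMk hζ') (measurableSet_Icc.preimage (by fun_prop))]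
        rfl
end
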